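/- In the adding-voters construction, if w is the unique fallback winner after adding a set W' of unregistered voters with ‖W'‖ ≤ k, then ‖W'‖ = k exactly: with ‖W'‖ ≤ k−2 candidate x has a strict majority at level 1, and with ‖W'‖ = k−1 candidates w and x tie with overall score k−1 each and no strict majority, so w is not the unique winner. -/

import Mathlib

/-!
With `s = ‖W'‖`, the election has `k - 1 + s` voters; `x` scores `k - 1` (all at level 1), `w`
scores `s`, and every vertex candidate at most `s`.  If `s ≤ k - 2`, then `x` alone holds a
level-1 majority, while `w` cannot, so `w` does not win.  If `s = k - 1`, every score is at most
half the electorate, so nobody ever reaches a strict majority and `x` ties with `w` on maximal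
overall score; both are winners.
-/

/- Fallback voting framework.  A ballot is the linearly ordered list of a voter's
approved candidates (most preferred first); an election is a list of ballots. -/
namespace FV

variable {α : Type*} [DecidableEq α]

/-- The level-`i` score of candidate `c`: the number of voters who approve `c`
and rank `c` among their top `i` approved candidates. -/
def levelScore (V : List (List α)) (i : ℕ) (c : α) : ℕ :=
  (V.filter (fun b => decide (c ∈ b.take i))).length

/-- The overall approval score of candidate `c`. -/
def score (V : List (List α)) (c : α) : ℕ :=
  (V.filter (fun b => decide (c ∈ b))).length

/-- `c` has a strict majority of approvals at level `i`. -/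
def MajAt (V : List (List α)) (i : ℕ) (c : α) : Prop :=
  2 * levelScore V i c > V.length

/-- `c` is a fallback voting winner of the election with candidate set `Cs`
and voter list `V`:  either at the first level (up to `‖Cs‖`) at which some
candidate attains a strict majority, `c` has a strict majority and maximal
level score among strict-majority candidates; or no candidate ever attains a
strict majority and `c` has maximal overall approval score. -/
def FVWinner (Cs : Finset α) (V : List (List α)) (c : α) : Prop :=
  c ∈ Cs ∧
    ((∃ i, 1 ≤ i ∧ i ≤ Cs.card ∧ MajAt V i c ∧
        (∀ j, j < i → ∀ d ∈ Cs, ¬ MajAt V j d) ∧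
        (∀ d ∈ Cs, MajAt V i d → levelScore V i d ≤ levelScore V i c)) ∨
     ((∀ i, i ≤ Cs.card → ∀ d ∈ Cs, ¬ MajAt V i d) ∧
        ∀ d ∈ Cs, score V d ≤ score V c))

/-- `c` is the unique fallback voting winner. -/
def UniqueFVWinner (Cs : Finset α) (V : List (List α)) (c : α) : Prop :=
  FVWinner Cs V c ∧ ∀ d, FVWinner Cs V d → d = c

end FV

/- The adding-voters construction of Erdélyi and Fellows.  Candidates are
`Sum (Fin n) Bool`: `Sum.inl b` is the vertex candidate for `b`, `Sum.inr
true` is `w` and `Sum.inr false` is `x`.  There are `k-1` registered voters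
approving only `x`; the unregistered voter `wᵢ` approves the candidates of
`B − N_c[bᵢ]` (in a fixed order given by the enumeration `L`) followed by `w`.
Adding the voters indexed by `S` yields the voter list `addElection`. -/
namespace AV

def wc (n : ℕ) : Sum (Fin n) Bool := Sum.inr true
def xc (n : ℕ) : Sum (Fin n) Bool := Sum.inr false

/-- The ballot of unregistered voter `wᵢ`. -/
def wballot {n : ℕ} (L : Fin n → List (Fin n)) (i : Fin n) : List (Sum (Fin n) Bool) :=
  (L i).map Sum.inl ++ [wc n]

/-- The voter list after adding the unregistered voters indexed by `S`. -/
def addElection {n : ℕ} (k : ℕ) (L : Fin n → List (Fin n)) (S : Finset (Fin n)) :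
    List (List (Sum (Fin n) Bool)) :=
  List.replicate (k - 1) [xc n] ++ (S.sort (· ≤ ·)).map (wballot L)

end AV

namespace FV

variable {α : Type*} [DecidableEq α]

theorem score_append (A B : List (List α)) (c : α) :
    score (A ++ B) c = score A c + score B c := by
  simp only [score, List.filter_append, List.length_append]

theorem levelScore_append (A B : List (List α)) (i : ℕ) (c : α) :
    levelScore (A ++ B) i c = levelScore A i c + levelScore B i c := by
  simp only [levelScore, List.filter_append, List.length_append]

theorem score_replicate (m : ℕ) (b : List α) (c : α) :
    score (List.replicate m b) c = if c ∈ b then m else 0 := by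
  unfold score
  split_ifs with h <;> simp [h]

theorem levelScore_replicate (m : ℕ) (b : List α) (i : ℕ) (c : α) :
    levelScore (List.replicate m b) i c = if c ∈ b.take i then m else 0 := by
  unfold levelScore
  split_ifs with h <;> simp [h]

theorem score_le_length (V : List (List α)) (c : α) : score V c ≤ V.length :=
  List.length_filter_le _ _

theorem levelScore_le_score (V : List (List α)) (i : ℕ) (c : α) :
    levelScore V i c ≤ score V c :=
  (List.monotone_filter_right V fun b hb => by
    simpa using List.mem_of_mem_take (by simpa using hb)).length_le

theorem not_majAt_of_two_mul_score_le {V : List (List α)} {c : α}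
    (h : 2 * score V c ≤ V.length) (i : ℕ) : ¬ MajAt V i c := by
  have := levelScore_le_score V i c
  unfold MajAt
  omega

theorem fvWinner_of_forall_not_majAt {Cs : Finset α} {V : List (List α)} {c : α} (hc : c ∈ Cs)
    (hnone : ∀ i d, ¬ MajAt V i d) (hmax : ∀ d ∈ Cs, score V d ≤ score V c) :
    FVWinner Cs V c :=
  ⟨hc, Or.inr ⟨fun i _ d _ => hnone i d, hmax⟩⟩

theorem FVWinner.majAt_one_of_majAt_one {Cs : Finset α} {V : List (List α)} {c d : α}
    (hc : FVWinner Cs V c) (hd : d ∈ Cs) (hmaj : MajAt V 1 d) : MajAt V 1 c := by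
  obtain ⟨-, ⟨i, hi, -, hci, hbefore, -⟩ | ⟨hnone, -⟩⟩ := hc
  · obtain rfl | hi := hi.eq_or_lt
    · exact hci
    · exact absurd hmaj (hbefore 1 hi d hd)
  · exact absurd hmaj (hnone 1 (Finset.card_pos.2 ⟨d, hd⟩) d hd)

end FV

namespace AV

open FV

variable {n k : ℕ} (L : Fin n → List (Fin n)) (S : Finset (Fin n))

theorem wc_ne_xc : wc n ≠ xc n := by
  simp [wc, xc]

theorem length_addElection : (addElection k L S).length = k - 1 + S.card := by
  simp [addElection]

theorem score_addElection_xc : score (addElection k L S) (xc n) = k - 1 := by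
  have hnone : score ((S.sort (· ≤ ·)).map (wballot L)) (xc n) = 0 := by
    simp [score, wballot, wc, xc]
  rw [addElection, score_append, score_replicate, hnone, if_pos (List.mem_singleton_self _),
    add_zero]

theorem score_addElection_wc : score (addElection k L S) (wc n) = S.card := by
  have hall : score ((S.sort (· ≤ ·)).map (wballot L)) (wc n) = S.card := by
    rw [score, List.filter_eq_self.2 (by simp [wballot])]
    simp
  rw [addElection, score_append, score_replicate, hall, if_neg (by simp [wc_ne_xc]), zero_add]

theorem score_addElection_inl (b : Fin n) : score (addElection k L S) (Sum.inl b) ≤ S.card := by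
  have := score_le_length ((S.sort (· ≤ ·)).map (wballot L)) (Sum.inl b)
  rw [addElection, score_append, score_replicate, if_neg (by simp [xc]), zero_add]
  simpa using this

theorem score_addElection_le (c : Sum (Fin n) Bool) :
    score (addElection k L S) c ≤ max (k - 1) S.card := by
  rcases c with b | _ | _
  · exact (score_addElection_inl L S b).trans (le_max_right _ _)
  · exact (score_addElection_xc L S).trans_le (le_max_left _ _)
  · exact (score_addElection_wc L S).trans_le (le_max_right _ _)

theorem le_levelScore_one_addElection_xc : k - 1 ≤ levelScore (addElection k L S) 1 (xc n) := by
  rw [addElection, levelScore_append, levelScore_replicate, if_pos (by simp)]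
  exact Nat.le_add_right _ _

theorem majAt_one_addElection_xc (h : S.card + 2 ≤ k) : MajAt (addElection k L S) 1 (xc n) := by
  have := le_levelScore_one_addElection_xc (k := k) L S
  unfold MajAt
  rw [length_addElection]
  omega

theorem not_fvWinner_addElection_wc (h : S.card + 2 ≤ k) :
    ¬ FVWinner Finset.univ (addElection k L S) (wc n) := by
  intro hw
  have hmaj := hw.majAt_one_of_majAt_one (Finset.mem_univ _) (majAt_one_addElection_xc L S h)
  have := (levelScore_le_score (addElection k L S) 1 (wc n)).trans_eq (score_addElection_wc L S)
  unfold MajAt at hmaj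
  rw [length_addElection] at hmaj
  omega

section Tie

variable {L S}

theorem not_majAt_addElection (h : S.card + 1 = k) (i : ℕ) (c : Sum (Fin n) Bool) :
    ¬ MajAt (addElection k L S) i c := by
  have := score_addElection_le (k := k) L S c
  refine not_majAt_of_two_mul_score_le ?_ i
  rw [length_addElection]
  omega

theorem fvWinner_addElection_xc (h : S.card + 1 = k) :
    FVWinner Finset.univ (addElection k L S) (xc n) := by
  refine fvWinner_of_forall_not_majAt (Finset.mem_univ _) (not_majAt_addElection h) fun d _ => ?_
  rw [score_addElection_xc]
  have := score_addElection_le (k := k) L S d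
  omega

theorem not_uniqueFVWinner_addElection_wc (h : S.card + 1 = k) :
    ¬ UniqueFVWinner Finset.univ (addElection k L S) (wc n) := fun hw =>
  wc_ne_xc (hw.2 _ (fvWinner_addElection_xc h)).symm

end Tie

end AV

theorem fv_adding_voters_needs_exactly_k_general {n k : ℕ}
    (L : Fin n → List (Fin n)) :
    ∀ S : Finset (Fin n),
      (S.card ≤ k → FV.UniqueFVWinner Finset.univ (AV.addElection k L S) (AV.wc n) →
        S.card = k) ∧
      (S.card + 2 ≤ k → FV.MajAt (AV.addElection k L S) 1 (AV.xc n)) ∧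
      (S.card + 1 = k →
        FV.score (AV.addElection k L S) (AV.wc n) = k - 1 ∧
        FV.score (AV.addElection k L S) (AV.xc n) = k - 1 ∧
        (∀ i c, ¬ FV.MajAt (AV.addElection k L S) i c) ∧
        ¬ FV.UniqueFVWinner Finset.univ (AV.addElection k L S) (AV.wc n)) := by
  intro S
  refine ⟨fun hle hw => ?_, AV.majAt_one_addElection_xc L S, fun h => ?_⟩
  · by_contra hne
    rcases Nat.lt_or_ge (S.card + 1) k with hlt | hge
    · exact AV.not_fvWinner_addElection_wc L S hlt hw.1
    · exact AV.not_uniqueFVWinner_addElection_wc (by omega) hw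
  · refine ⟨?_, AV.score_addElection_xc L S, AV.not_majAt_addElection h,
      AV.not_uniqueFVWinner_addElection_wc h⟩
    rw [AV.score_addElection_wc]
    omega

/-- if adding a set `W'` (indexed by `S`) of at most `k`
unregistered voters makes `w` the unique fallback winner, then `‖W'‖ = k`
exactly; with `‖W'‖ ≤ k-2` candidate `x` has a strict majority at level 1,
and with `‖W'‖ = k-1` candidates `w` and `x` tie with overall score `k-1`
each, no candidate has a strict majority at any level, and `w` is not the
unique winner. -/
theorem fv_adding_voters_needs_exactly_k {n k : ℕ} (hk : 0 < k)
    (G : SimpleGraph (Fin n)) [DecidableRel G.Adj]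
    (L : Fin n → List (Fin n))
    (hnd : ∀ i, (L i).Nodup)
    (hmem : ∀ i b, b ∈ L i ↔ ¬ (b = i ∨ G.Adj i b)) :
    ∀ S : Finset (Fin n),
      (S.card ≤ k → FV.UniqueFVWinner Finset.univ (AV.addElection k L S) (AV.wc n) →
        S.card = k) ∧
      (S.card + 2 ≤ k → FV.MajAt (AV.addElection k L S) 1 (AV.xc n)) ∧
      (S.card + 1 = k →
        FV.score (AV.addElection k L S) (AV.wc n) = k - 1 ∧
        FV.score (AV.addElection k L S) (AV.xc n) = k - 1 ∧
        (∀ i c, ¬ FV.MajAt (AV.addElection k L S) i c) ∧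
        ¬ FV.UniqueFVWinner Finset.univ (AV.addElection k L S) (AV.wc n)) :=
  fv_adding_voters_needs_exactly_k_general L
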